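/- arXiv:2409.02211 — 2 statements merged into one kernel-verified Lean document; each statement's English description precedes it below -/
import Mathlib

section
/- In the free supercommutative superalgebra over ℝ on odd generators t^δ_j indexed by δ ∈ Δₙ∖{0} and j ∈ {1,…,m}, with Sₙ acting by s·t^δ_j = t^{s·δ}_j, a primitive monomial T = t^{γ₁}_{i₁}⋯t^{γ_q}_{i_q} (all generators odd) satisfies Σ_{s∈Sₙ} s·T = 0 if and only if T contains two factors t^{γ_p}_{i_p}, t^{γ_r}_{i_r} with p ≠ r, ♯γ_p = ♯γ_r, and i_p = i_r. -/
open Finset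

/-- `γ : Fin q → Finset (Fin n)` is the *standard decomposition* of
`α₁ + ⋯ + α_k` (where `k` is the total size): the blocks are nonempty consecutive
intervals of `{0,…,k-1}` of weakly increasing sizes. -/
def IsStdDecomp {n q : ℕ} (γ : Fin q → Finset (Fin n)) : Prop :=
  (∀ j, (γ j).Nonempty) ∧
  (∀ j l : Fin q, j ≤ l → (γ j).card ≤ (γ l).card) ∧
  ∀ j : Fin q, γ j = Finset.univ.filter (fun i : Fin n =>
      (∑ l ∈ Finset.univ.filter (· < j), (γ l).card) ≤ i.val ∧
      i.val < ∑ l ∈ Finset.univ.filter (· ≤ j), (γ l).card)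

/-- A monomial `t^{γ₁}_{i₁} ⋯ t^{γ_q}_{i_q}` is *primitive* if `(γ₁,…,γ_q)` is the
standard decomposition and indices on equal-length blocks are weakly increasing. -/
def IsPrimitive {n q : ℕ} (γ : Fin q → Finset (Fin n)) (i : Fin q → ℕ) : Prop :=
  IsStdDecomp γ ∧ ∀ j l : Fin q, j < l → (γ j).card = (γ l).card → i j ≤ i l

noncomputable section

/-- The exterior algebra over `ℝ` on odd generators `t^δ_j`, `δ ∈ Δₙ`, `j ∈ ℕ`. -/
abbrev ExtAlg (n : ℕ) : Type :=
  ExteriorAlgebra ℝ ((Finset (Fin n) × ℕ) →₀ ℝ)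

/-- The odd generator `t^δ_j`. -/
def tgen {n : ℕ} (δ : Finset (Fin n)) (j : ℕ) : ExtAlg n :=
  ExteriorAlgebra.ι ℝ (Finsupp.single (δ, j) (1 : ℝ))

/-- The action of `s ∈ Sₙ` on the exterior algebra, `s · t^δ_j = t^{s·δ}_j`. -/
def permAct {n : ℕ} (s : Equiv.Perm (Fin n)) : ExtAlg n →ₐ[ℝ] ExtAlg n :=
  ExteriorAlgebra.lift ℝ
    ⟨(ExteriorAlgebra.ι ℝ).comp
        (Finsupp.lmapDomain ℝ ℝ (fun p : Finset (Fin n) × ℕ => (p.1.image s, p.2))),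
      fun m => ExteriorAlgebra.ι_sq_zero _⟩

/-- The ordered monomial `t^{γ₁}_{i₁} ⋯ t^{γ_q}_{i_q}`. -/
def extMono {n q : ℕ} (γ : Fin q → Finset (Fin n)) (i : Fin q → ℕ) : ExtAlg n :=
  (List.ofFn fun j => tgen (γ j) (i j)).prod

end

section Aux

variable {n q : ℕ}

lemma permAct_tgen (s : Equiv.Perm (Fin n)) (δ : Finset (Fin n)) (j : ℕ) :
    permAct s (tgen δ j) = tgen (δ.image s) j := by
  unfold permAct tgen
  rw [ExteriorAlgebra.lift_ι_apply]
  simp [Finsupp.mapDomain_single]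

lemma extMono_eq (γ : Fin q → Finset (Fin n)) (i : Fin q → ℕ) :
    extMono γ i =
      ExteriorAlgebra.ιMulti ℝ q (fun j => Finsupp.single (γ j, i j) (1 : ℝ)) := by
  rw [ExteriorAlgebra.ιMulti_apply]
  rfl

lemma permAct_extMono (s : Equiv.Perm (Fin n)) (γ : Fin q → Finset (Fin n))
    (i : Fin q → ℕ) :
    permAct s (extMono γ i) = extMono (fun j => (γ j).image s) i := by
  unfold extMono
  rw [map_list_prod]
  congr 1
  rw [List.map_ofFn]
  exact congrArg List.ofFn (funext fun j => permAct_tgen s (γ j) (i j))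

lemma stdDecomp_disjoint {γ : Fin q → Finset (Fin n)} (h : IsStdDecomp γ)
    {p r : Fin q} (hpr : p ≠ r) : Disjoint (γ p) (γ r) := by
  obtain ⟨hne, hmono, hchar⟩ := h
  have key : ∀ a b : Fin q, a < b → Disjoint (γ a) (γ b) := by
    intro a b hab
    rw [Finset.disjoint_left]
    intro x hxa hxb
    rw [hchar a, Finset.mem_filter] at hxa
    rw [hchar b, Finset.mem_filter] at hxb
    have h1 : (∑ l ∈ Finset.univ.filter (· ≤ a), (γ l).card)
        ≤ ∑ l ∈ Finset.univ.filter (· < b), (γ l).card := by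
      apply Finset.sum_le_sum_of_subset
      intro l hl
      simp only [Finset.mem_filter, Finset.mem_univ, true_and] at hl ⊢
      exact lt_of_le_of_lt hl hab
    omega
  rcases hpr.lt_or_gt with h' | h'
  · exact key p r h'
  · exact (key r p h').symm

lemma exists_swap_perm {p r : Finset (Fin n)} (hd : Disjoint p r)
    (hc : p.card = r.card) :
    ∃ τ : Equiv.Perm (Fin n), p.image τ = r ∧ r.image τ = p ∧
      ∀ x : Fin n, x ∉ p → x ∉ r → τ x = x := by
  classical
  let e : {x // x ∈ p} ≃ {x // x ∈ r} := Finset.equivOfCardEq hc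
  set f : Fin n → Fin n := fun x =>
    if hx : x ∈ p then (e ⟨x, hx⟩ : Fin n)
    else if hx' : x ∈ r then (e.symm ⟨x, hx'⟩ : Fin n) else x with hf
  have hfp : ∀ x (hx : x ∈ p), f x = (e ⟨x, hx⟩ : Fin n) := fun x hx => dif_pos hx
  have hfr : ∀ x (hx : x ∈ r), f x = (e.symm ⟨x, hx⟩ : Fin n) := by
    intro x hx
    have hxp : x ∉ p := fun h => (Finset.disjoint_left.mp hd h) hx
    simp only [hf, dif_neg hxp, dif_pos hx]
  have hout : ∀ x, x ∉ p → x ∉ r → f x = x := by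
    intro x h1 h2; simp only [hf, dif_neg h1, dif_neg h2]
  have hinv : Function.Involutive f := by
    intro x
    by_cases hx : x ∈ p
    · rw [hfp x hx]
      have hm : ((e ⟨x, hx⟩ : {x // x ∈ r}) : Fin n) ∈ r := (e ⟨x, hx⟩).2
      rw [hfr _ hm]
      simp
    · by_cases hx' : x ∈ r
      · rw [hfr x hx']
        have hm : ((e.symm ⟨x, hx'⟩ : {x // x ∈ p}) : Fin n) ∈ p := (e.symm ⟨x, hx'⟩).2
        rw [hfp _ hm]
        simp
      · rw [hout x hx hx', hout x hx hx']
  refine ⟨hinv.toPerm f, ?_, ?_, fun x h1 h2 => by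
    rw [Function.Involutive.coe_toPerm]; exact hout x h1 h2⟩
  · apply Finset.eq_of_subset_of_card_le
    · intro y hy
      rw [Finset.mem_image] at hy
      obtain ⟨x, hx, rfl⟩ := hy
      rw [Function.Involutive.coe_toPerm, hfp x hx]
      exact (e ⟨x, hx⟩).2
    · rw [Finset.card_image_of_injective _ (hinv.toPerm f).injective, hc]
  · apply Finset.eq_of_subset_of_card_le
    · intro y hy
      rw [Finset.mem_image] at hy
      obtain ⟨x, hx, rfl⟩ := hy
      rw [Function.Involutive.coe_toPerm, hfr x hx]
      exact (e.symm ⟨x, hx⟩).2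
    · rw [Finset.card_image_of_injective _ (hinv.toPerm f).injective, hc]

end Aux

/-- for a primitive monomial `T` of odd generators, the symmetrization
`Σ_{s∈Sₙ} s·T` vanishes iff `T` contains two factors with equal length weights and
equal lower index. -/
theorem symmetrized_primitive_eq_zero_iff {n q : ℕ}
    (γ : Fin q → Finset (Fin n)) (i : Fin q → ℕ)
    (hprim : IsPrimitive γ i) :
    (∑ s : Equiv.Perm (Fin n), permAct s (extMono γ i)) = 0 ↔
      ∃ p r : Fin q, p ≠ r ∧ (γ p).card = (γ r).card ∧ i p = i r := by
  classical
  constructor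
  · intro hzero
    by_contra hcon
    push_neg at hcon
    -- detecting functional
    set f : (((Finset (Fin n) × ℕ) →₀ ℝ) [⋀^Fin q]→ₗ[ℝ] ℝ) :=
      Matrix.detRowAlternating.compLinearMap
        (LinearMap.pi fun b : Fin q => Finsupp.lapply (γ b, i b)) with hfdef
    set F : ∀ k, (((Finset (Fin n) × ℕ) →₀ ℝ) [⋀^Fin k]→ₗ[ℝ] ℝ) :=
      Function.update (fun k => 0) q f with hF
    have hφ := congrArg (ExteriorAlgebra.liftAlternating F) hzero
    rw [map_sum, map_zero] at hφ
    have hterm : ∀ s : Equiv.Perm (Fin n),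
        ExteriorAlgebra.liftAlternating F (permAct s (extMono γ i)) =
          (if ∀ a : Fin q, (γ a).image s = γ a then (1 : ℝ) else 0) := by
      intro s
      rw [permAct_extMono, extMono_eq, ExteriorAlgebra.liftAlternating_apply_ιMulti]
      have hFq : F q = f := by rw [hF]; exact Function.update_self (β := fun k => (((Finset (Fin n) × ℕ) →₀ ℝ) [⋀^Fin k]→ₗ[ℝ] ℝ)) q f _
      rw [hFq]
      rw [hfdef]
      simp only [AlternatingMap.compLinearMap_apply]
      have hmat : (fun j : Fin q =>
            (LinearMap.pi fun b : Fin q => Finsupp.lapply (R := ℝ) (γ b, i b))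
              (Finsupp.single ((γ j).image s, i j) (1 : ℝ))) =
          Matrix.diagonal (fun a : Fin q =>
            if (γ a).image s = γ a then (1 : ℝ) else 0) := by
      -- each entry
        funext a b
        simp only [LinearMap.pi_apply, Finsupp.lapply_apply,
          Finsupp.single_apply]
        by_cases hab : a = b
        · subst hab
          rw [Matrix.diagonal_apply_eq]
          simp [Prod.ext_iff]
        · rw [Matrix.diagonal_apply_ne _ hab, if_neg]
          intro heq
          rw [Prod.mk.injEq] at heq
          obtain ⟨h1, h2⟩ := heq
          have hcardeq : (γ a).card = (γ b).card := by
            rw [← h1, Finset.card_image_of_injective _ s.injective]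
          exact hcon a b hab hcardeq h2
      rw [hmat]
      rw [show Matrix.detRowAlternating
            (Matrix.diagonal (fun a : Fin q =>
              if (γ a).image s = γ a then (1 : ℝ) else 0)) =
          (Matrix.diagonal (fun a : Fin q =>
              if (γ a).image s = γ a then (1 : ℝ) else 0)).det from rfl,
        Matrix.det_diagonal]
      by_cases hall : ∀ a : Fin q, (γ a).image s = γ a
      · rw [if_pos hall]
        exact Finset.prod_eq_one (fun a _ => if_pos (hall a))
      · rw [if_neg hall]
        obtain ⟨a, ha⟩ := not_forall.mp hall
        exact Finset.prod_eq_zero (Finset.mem_univ a) (if_neg ha)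
    rw [Finset.sum_congr rfl (fun s _ => hterm s), Finset.sum_boole,
      Nat.cast_eq_zero, Finset.card_eq_zero] at hφ
    have h1 : (1 : Equiv.Perm (Fin n)) ∈
        Finset.univ.filter (fun s : Equiv.Perm (Fin n) =>
          ∀ a : Fin q, (γ a).image s = γ a) := by
      simp
    rw [hφ] at h1
    exact absurd h1 (Finset.notMem_empty _)
  · rintro ⟨p, r, hne, hcard, hi⟩
    have hdis : Disjoint (γ p) (γ r) := stdDecomp_disjoint hprim.1 hne
    obtain ⟨τ, hpr, hrp, hfix⟩ := exists_swap_perm hdis hcard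
    have hjj : ∀ j : Fin q, j ≠ p → j ≠ r → (γ j).image τ = γ j := by
      intro j hjp hjr
      have : (γ j).image τ = (γ j).image id := by
        apply Finset.image_congr
        intro x hx
        simp only [Finset.coe_sort_coe, Finset.mem_coe] at hx
        exact hfix x
          (Finset.disjoint_left.mp (stdDecomp_disjoint hprim.1 hjp) hx)
          (Finset.disjoint_left.mp (stdDecomp_disjoint hprim.1 hjr) hx)
      rw [this, Finset.image_id]
    have hkey : ∀ s : Equiv.Perm (Fin n),
        extMono (fun j => (γ j).image (s * τ)) i =
          - extMono (fun j => (γ j).image s) i := by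
      intro s
      rw [extMono_eq, extMono_eq]
      have hvec : (fun j : Fin q =>
            Finsupp.single ((γ j).image (s * τ), i j) (1 : ℝ)) =
          (fun j : Fin q => Finsupp.single ((γ j).image s, i j) (1 : ℝ)) ∘
            (Equiv.swap p r) := by
        funext j
        have himg : (γ j).image (s * τ) = ((γ j).image τ).image s := by
          rw [Finset.image_image, Equiv.Perm.coe_mul]
        by_cases hjp : j = p
        · subst hjp
          rw [himg, hpr, Function.comp_apply, Equiv.swap_apply_left, hi]
        · by_cases hjr : j = r
          · subst hjr
            rw [himg, hrp, Function.comp_apply, Equiv.swap_apply_right, ← hi]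
          · rw [himg, hjj j hjp hjr, Function.comp_apply,
              Equiv.swap_apply_of_ne_of_ne hjp hjr]
      rw [hvec, AlternatingMap.map_perm, Equiv.Perm.sign_swap hne]
      simp
    set S := ∑ s : Equiv.Perm (Fin n), permAct s (extMono γ i) with hS
    have h1 : S = ∑ s : Equiv.Perm (Fin n), extMono (fun j => (γ j).image s) i :=
      Finset.sum_congr rfl (fun s _ => permAct_extMono s γ i)
    have h2 : S = ∑ s : Equiv.Perm (Fin n), extMono (fun j => (γ j).image (s * τ)) i := by
      rw [h1]
      exact (Fintype.sum_equiv (Equiv.mulRight τ)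
        (fun s => extMono (fun j => (γ j).image (s * τ)) i)
        (fun s => extMono (fun j => (γ j).image s) i) (fun s => rfl)).symm
    have h3 : S = -S := by
      calc S = ∑ s : Equiv.Perm (Fin n), extMono (fun j => (γ j).image (s * τ)) i := h2
        _ = ∑ s : Equiv.Perm (Fin n), -(extMono (fun j => (γ j).image s) i) :=
            Finset.sum_congr rfl (fun s _ => hkey s)
        _ = -∑ s : Equiv.Perm (Fin n), extMono (fun j => (γ j).image s) i := by
            rw [Finset.sum_neg_distrib]
        _ = -S := by rw [← h1]
    have h5 : (2 : ℝ) • S = 0 := by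
      rw [two_smul]
      nth_rewrite 1 [h3]
      exact neg_add_cancel S
    have := smul_eq_zero.mp h5
    exact this.resolve_left (by norm_num)
end

section
/- Let T' = t^{δ₁}_{i₁}⋯t^{δ_q}_{i_q} be a monomial in the free supercommutative algebra on generators t^δ_j (δ ∈ Δₙ∖{0}), such that δ₁+⋯+δ_q ∈ Δₙ (i.e., the supports of the δⱼ are pairwise disjoint). Then there exists a primitive monomial T and a sign ε ∈ {+1,−1} such that Σ_{s∈Sₙ} s·T' = ε Σ_{s∈Sₙ} s·T. -/
open Finset

theorem reorder_sign {A : Type*} [Ring A] [Algebra ℝ A] {ι : Type*} (p : ι → Bool)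
    {L L' : List ι} (hP : L.Perm L') :
    ∃ ε : ℝ, (ε = 1 ∨ ε = -1) ∧ ∀ a : ι → A,
      (∀ j l, a j * a l = (if p j ∧ p l then (-1:ℝ) else 1) • (a l * a j)) →
      (L.map a).prod = ε • (L'.map a).prod := by
  induction hP with
  | nil => exact ⟨1, Or.inl rfl, fun a _ => (one_smul ℝ _).symm⟩
  | cons x _ ih =>
      obtain ⟨ε, hε, he⟩ := ih
      refine ⟨ε, hε, fun a ha => ?_⟩
      simp only [List.map_cons, List.prod_cons, he a ha, mul_smul_comm]
  | swap x y l =>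
      refine ⟨if p x ∧ p y then -1 else 1, by split <;> simp, fun a ha => ?_⟩
      simp only [List.map_cons, List.prod_cons, ← mul_assoc]
      rw [ha y x, smul_mul_assoc]
      by_cases h : p x = true ∧ p y = true
      · rw [if_pos h, if_pos ⟨h.2, h.1⟩]
      · rw [if_neg h, if_neg (fun h' => h ⟨h'.2, h'.1⟩)]
  | trans h1 h2 ih1 ih2 =>
      obtain ⟨ε1, hε1, he1⟩ := ih1
      obtain ⟨ε2, hε2, he2⟩ := ih2
      refine ⟨ε1 * ε2, ?_, fun a ha => by rw [he1 a ha, he2 a ha, smul_smul]⟩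
      rcases hε1 with h | h <;> rcases hε2 with h' | h' <;> simp [h, h']

theorem card_filter_interval (n a b : ℕ) (hb : b ≤ n) :
    (Finset.univ.filter (fun i : Fin n => a ≤ i.val ∧ i.val < b)).card = b - a := by
  have himg : (Finset.univ.filter fun i : Fin n => a ≤ i.val ∧ i.val < b).image Fin.val
      = Finset.Ico a b := by
    ext x
    simp only [Finset.mem_image, Finset.mem_filter, Finset.mem_univ, true_and, Finset.mem_Ico]
    constructor
    · rintro ⟨y, hy, rfl⟩; exact hy
    · rintro ⟨h1, h2⟩; exact ⟨⟨x, lt_of_lt_of_le h2 hb⟩, ⟨h1, h2⟩, rfl⟩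
  rw [← Nat.card_Ico a b, ← himg, Finset.card_image_of_injective _ Fin.val_injective]

theorem exists_perm_image {n q : ℕ} (γ δ : Fin q → Finset (Fin n))
    (hcard : ∀ j, (γ j).card = (δ j).card)
    (hγ : Pairwise fun j l => Disjoint (γ j) (γ l))
    (hδ : Pairwise fun j l => Disjoint (δ j) (δ l)) :
    ∃ τ : Equiv.Perm (Fin n), ∀ j, (γ j).image τ = δ j := by
  classical
  have uγ : ∀ {x : Fin n} {j l : Fin q}, x ∈ γ j → x ∈ γ l → j = l := by
    intro x j l hj hl
    by_contra h
    exact (Finset.disjoint_left.mp (hγ h) hj) hl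
  have uδ : ∀ {x : Fin n} {j l : Fin q}, x ∈ δ j → x ∈ δ l → j = l := by
    intro x j l hj hl
    by_contra h
    exact (Finset.disjoint_left.mp (hδ h) hj) hl
  have hce : ∀ j, Fintype.card {x // x ∈ γ j} = Fintype.card {x // x ∈ δ j} := by
    intro j; simp only [Fintype.card_coe]; exact hcard j
  let e : ∀ j, {x // x ∈ γ j} ≃ {x // x ∈ δ j} := fun j => Fintype.equivOfCardEq (hce j)
  -- bundling maps for the sigma types
  let gγ : (Σ j, {x // x ∈ γ j}) → {x : Fin n // ∃ j, x ∈ γ j} :=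
    fun z => ⟨z.2.1, ⟨z.1, z.2.2⟩⟩
  let gδ : (Σ j, {x // x ∈ δ j}) → {x : Fin n // ∃ j, x ∈ δ j} :=
    fun z => ⟨z.2.1, ⟨z.1, z.2.2⟩⟩
  have bγ : Function.Bijective gγ := by
    constructor
    · rintro ⟨j, x, hx⟩ ⟨l, y, hy⟩ h
      have hval : x = y := congrArg Subtype.val h
      subst hval
      have : j = l := uγ hx hy
      subst this
      rfl
    · rintro ⟨x, hx⟩
      exact ⟨⟨hx.choose, ⟨x, hx.choose_spec⟩⟩, rfl⟩
  have bδ : Function.Bijective gδ := by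
    constructor
    · rintro ⟨j, x, hx⟩ ⟨l, y, hy⟩ h
      have hval : x = y := congrArg Subtype.val h
      subst hval
      have : j = l := uδ hx hy
      subst this
      rfl
    · rintro ⟨x, hx⟩
      exact ⟨⟨hx.choose, ⟨x, hx.choose_spec⟩⟩, rfl⟩
  let E : {x : Fin n // ∃ j, x ∈ γ j} ≃ {x : Fin n // ∃ j, x ∈ δ j} :=
    (Equiv.ofBijective gγ bγ).symm.trans
      ((Equiv.sigmaCongrRight e).trans (Equiv.ofBijective gδ bδ))
  have hEmem : ∀ (x : Fin n) (hp : ∃ j, x ∈ γ j) (j : Fin q), x ∈ γ j → (E ⟨x, hp⟩).1 ∈ δ j := by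
    intro x hp j hx
    set w := (Equiv.ofBijective gγ bγ).symm ⟨x, hp⟩ with hw
    have hgw : gγ w = ⟨x, hp⟩ := by rw [hw]; exact (Equiv.ofBijective gγ bγ).apply_symm_apply _
    have hwval : (w.2 : Fin n) = x := congrArg Subtype.val hgw
    have hwmem : x ∈ γ w.1 := hwval ▸ w.2.2
    have hwj : w.1 = j := uγ hwmem hx
    have hE : (E ⟨x, hp⟩).1 = ((e w.1) w.2 : Fin n) := rfl
    rw [hE, ← hwj]
    exact ((e w.1) w.2).2
  refine ⟨E.extendSubtype, fun j => ?_⟩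
  apply Finset.eq_of_subset_of_card_le
  · intro y hy
    simp only [Finset.mem_image] at hy
    obtain ⟨x, hx, rfl⟩ := hy
    rw [Equiv.extendSubtype_apply_of_mem _ x ⟨j, hx⟩]
    exact hEmem x ⟨j, hx⟩ j hx
  · rw [Finset.card_image_of_injective _ (Equiv.injective _), hcard j]

/-- in a supercommutative algebra on generators `t^δ_j` (with a parity
depending only on the length `♯δ`) carrying the `Sₙ`-action `s·t^δ_j = t^{s·δ}_j`,
the symmetrization of any monomial of multiplicity-free weight equals, up to a sign
`ε ∈ {±1}`, the symmetrization of a primitive monomial. -/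
theorem symmetrized_eq_sign_mul_symmetrized_primitive
    {n q : ℕ} (A : Type*) [Ring A] [Algebra ℝ A]
    (t : Finset (Fin n) → ℕ → A)
    (par : ℕ → Bool)
    -- supercommutativity: generators commute up to the sign given by their parities
    (hsuper : ∀ (δ δ' : Finset (Fin n)) (j j' : ℕ),
      t δ j * t δ' j' =
        (if par δ.card ∧ par δ'.card then (-1 : ℝ) else 1) • (t δ' j' * t δ j))
    (act : Equiv.Perm (Fin n) → (A →ₐ[ℝ] A))
    (hact : ∀ s δ j, act s (t δ j) = t (δ.image s) j)
    (δ : Fin q → Finset (Fin n)) (i : Fin q → ℕ)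
    (hne : ∀ j, (δ j).Nonempty)
    (hdisj : Pairwise fun j l => Disjoint (δ j) (δ l)) :
    ∃ (γ : Fin q → Finset (Fin n)) (i' : Fin q → ℕ) (ε : ℝ),
      (ε = 1 ∨ ε = -1) ∧ IsPrimitive γ i' ∧
      (∑ s : Equiv.Perm (Fin n), act s ((List.ofFn fun j => t (δ j) (i j)).prod)) =
        ε • ∑ s : Equiv.Perm (Fin n), act s ((List.ofFn fun j => t (γ j) (i' j)).prod) := by
  classical
  -- sort by (card, index) lexicographically
  set key : Fin q → Lex (ℕ × ℕ) := fun j => toLex ((δ j).card, i j) with hkey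
  set σ : Equiv.Perm (Fin q) := Tuple.sort key with hσ
  have hmono : Monotone (key ∘ σ) := Tuple.monotone_sort key
  set c : Fin q → ℕ := fun j => (δ (σ j)).card with hc
  set i'' : Fin q → ℕ := fun j => i (σ j) with hi''
  have hcmono : ∀ j l : Fin q, j ≤ l → c j ≤ c l := by
    intro j l h
    have := hmono h
    rw [Function.comp_apply, Function.comp_apply, hkey, Prod.Lex.le_iff] at this
    rcases this with h' | h'
    · exact le_of_lt h'
    · exact le_of_eq h'.1
  have himono : ∀ j l : Fin q, j < l → c j = c l → i'' j ≤ i'' l := by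
    intro j l h hcc
    have := hmono (le_of_lt h)
    rw [Function.comp_apply, Function.comp_apply, hkey, Prod.Lex.le_iff] at this
    rcases this with h' | h'
    · exact absurd hcc (ne_of_lt h')
    · exact h'.2
  -- total size bound
  have htot : ∑ j, c j ≤ n := by
    have h1 : ∑ j, c j = ∑ j, (δ j).card := Equiv.sum_comp σ (fun j => (δ j).card)
    have h2 : ∑ j, (δ j).card = (Finset.univ.biUnion δ).card := by
      rw [Finset.card_biUnion]
      intro x _ y _ hxy
      exact hdisj hxy
    calc ∑ j, c j = (Finset.univ.biUnion δ).card := by rw [h1, h2]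
      _ ≤ Fintype.card (Fin n) := Finset.card_le_univ _
      _ = n := Fintype.card_fin n
  -- the standard blocks
  set S : Fin q → ℕ := fun j => ∑ l ∈ Finset.univ.filter (· < j), c l with hS
  set γ : Fin q → Finset (Fin n) := fun j =>
    Finset.univ.filter (fun x : Fin n => S j ≤ x.val ∧ x.val < S j + c j) with hγ
  have hfil : ∀ j : Fin q, Finset.univ.filter (· ≤ j) = insert j (Finset.univ.filter (· < j)) := by
    intro j
    ext l
    simp only [Finset.mem_filter, Finset.mem_univ, true_and, Finset.mem_insert]
    constructor
    · intro h; rcases eq_or_lt_of_le h with h' | h'; exacts [Or.inl h', Or.inr h']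
    · rintro (rfl | h); exacts [le_refl _, le_of_lt h]
  have hSc : ∀ j, ∑ l ∈ Finset.univ.filter (· ≤ j), c l = S j + c j := by
    intro j
    rw [hfil j, Finset.sum_insert (by simp), hS]
    ring
  have hSle : ∀ j, S j + c j ≤ n := by
    intro j
    refine le_trans ?_ htot
    rw [← hSc j]
    exact Finset.sum_le_sum_of_subset (Finset.filter_subset _ _)
  have hcard : ∀ j, (γ j).card = c j := by
    intro j
    rw [hγ]
    simp only []
    rw [card_filter_interval n (S j) (S j + c j) (hSle j)]
    omega
  have hcpos : ∀ j, 0 < c j := by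
    intro j
    rw [hc]
    exact Finset.card_pos.mpr (hne (σ j))
  have hγne : ∀ j, (γ j).Nonempty := fun j =>
    Finset.card_pos.mp (by rw [hcard j]; exact hcpos j)
  have hstd3 : ∀ j : Fin q, γ j = Finset.univ.filter (fun x : Fin n =>
      (∑ l ∈ Finset.univ.filter (· < j), (γ l).card) ≤ x.val ∧
      x.val < ∑ l ∈ Finset.univ.filter (· ≤ j), (γ l).card) := by
    intro j
    have e1 : ∑ l ∈ Finset.univ.filter (· < j), (γ l).card = S j :=
      Finset.sum_congr rfl (fun l _ => hcard l)
    have e2 : ∑ l ∈ Finset.univ.filter (· ≤ j), (γ l).card = S j + c j := by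
      rw [Finset.sum_congr rfl (fun l _ => hcard l)]
      exact hSc j
    rw [e1, e2]
  have hγdisj : Pairwise fun j l => Disjoint (γ j) (γ l) := by
    have hkey2 : ∀ j l : Fin q, j < l → Disjoint (γ j) (γ l) := by
      intro j l hjl
      have hle : S j + c j ≤ S l := by
        rw [← hSc j, hS]
        apply Finset.sum_le_sum_of_subset
        intro m hm
        simp only [Finset.mem_filter, Finset.mem_univ, true_and] at hm ⊢
        exact lt_of_le_of_lt hm hjl
      rw [Finset.disjoint_left]
      intro x hx hx'
      rw [hγ] at hx hx'
      simp only [Finset.mem_filter, Finset.mem_univ, true_and] at hx hx'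
      omega
    intro j l h
    rcases h.lt_or_gt with h' | h'
    · exact hkey2 _ _ h'
    · exact (hkey2 _ _ h').symm
  have hδσdisj : Pairwise fun j l => Disjoint (δ (σ j)) (δ (σ l)) := by
    intro j l h
    exact hdisj (fun e => h (σ.injective e))
  obtain ⟨τ, hτ⟩ := exists_perm_image γ (fun j => δ (σ j))
    (fun j => by rw [hcard j]) hγdisj hδσdisj
  -- the sign
  have hperm : (List.finRange q).Perm ((List.finRange q).map σ) := by
    apply List.perm_of_nodup_nodup_toFinset_eq (List.nodup_finRange q)
      ((List.nodup_finRange q).map σ.injective)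
    ext x
    simp only [List.mem_toFinset, List.mem_finRange, List.mem_map, true_iff]
    exact ⟨σ.symm x, by simp⟩
  obtain ⟨ε, hε, hεp⟩ := reorder_sign (A := A) (fun j => par (δ j).card) hperm
  refine ⟨γ, i'', ε, hε, ⟨⟨hγne, fun j l h => by rw [hcard j, hcard l]; exact hcmono j l h, hstd3⟩,
    fun j l h hcc => himono j l h (by rw [← hcard j, ← hcard l]; exact hcc)⟩, ?_⟩
  -- expand the action on products
  have hterm : ∀ (s : Equiv.Perm (Fin n)) (β : Fin q → Finset (Fin n)) (ind : Fin q → ℕ),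
      act s ((List.ofFn fun j => t (β j) (ind j)).prod)
        = (List.ofFn fun j => t ((β j).image s) (ind j)).prod := by
    intro s β ind
    rw [map_list_prod, List.map_ofFn]
    exact congrArg List.prod (congrArg List.ofFn (funext fun j => hact s (β j) (ind j)))
  have hcimg : ∀ (s : Equiv.Perm (Fin n)) (β : Finset (Fin n)), (β.image s).card = β.card :=
    fun s β => Finset.card_image_of_injective _ s.injective
  have hstep : ∀ s : Equiv.Perm (Fin n),
      (List.ofFn fun j => t ((δ j).image s) (i j)).prod
        = ε • (List.ofFn fun j => t ((δ (σ j)).image s) (i'' j)).prod := by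
    intro s
    have ha : ∀ j l : Fin q,
        (fun j => t ((δ j).image s) (i j)) j * (fun j => t ((δ j).image s) (i j)) l
          = (if par (δ j).card ∧ par (δ l).card then (-1 : ℝ) else 1)
            • ((fun j => t ((δ j).image s) (i j)) l * (fun j => t ((δ j).image s) (i j)) j) := by
      intro j l
      simp only []
      rw [hsuper, hcimg, hcimg]
    have := hεp (fun j => t ((δ j).image s) (i j)) ha
    rw [List.ofFn_eq_map, this, List.map_map]
    rw [List.ofFn_eq_map]
    rfl
  have hreindex : ∑ s : Equiv.Perm (Fin n), (List.ofFn fun j => t ((δ (σ j)).image s) (i'' j)).prod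
      = ∑ s : Equiv.Perm (Fin n), (List.ofFn fun j => t ((γ j).image s) (i'' j)).prod := by
    apply Fintype.sum_equiv (Equiv.mulRight τ)
    intro s
    refine congrArg List.prod (congrArg List.ofFn (funext fun j => ?_))
    have h1 : (γ j).image ((Equiv.mulRight τ) s : Fin n → Fin n)
        = ((γ j).image τ).image s := by
      rw [Finset.image_image]
      rfl
    rw [h1, hτ j]
  calc ∑ s : Equiv.Perm (Fin n), act s ((List.ofFn fun j => t (δ j) (i j)).prod)
      = ∑ s : Equiv.Perm (Fin n), (List.ofFn fun j => t ((δ j).image s) (i j)).prod := by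
        refine Finset.sum_congr rfl fun s _ => hterm s δ i
    _ = ∑ s : Equiv.Perm (Fin n), ε • (List.ofFn fun j => t ((δ (σ j)).image s) (i'' j)).prod := by
        refine Finset.sum_congr rfl fun s _ => hstep s
    _ = ε • ∑ s : Equiv.Perm (Fin n), (List.ofFn fun j => t ((δ (σ j)).image s) (i'' j)).prod := by
        rw [Finset.smul_sum]
    _ = ε • ∑ s : Equiv.Perm (Fin n), (List.ofFn fun j => t ((γ j).image s) (i'' j)).prod := by
        rw [hreindex]
    _ = ε • ∑ s : Equiv.Perm (Fin n), act s ((List.ofFn fun j => t (γ j) (i'' j)).prod) := by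
        congr 1
        refine Finset.sum_congr rfl fun s _ => (hterm s γ i'').symm
end
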